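/- Let L > 0 and let u : [0,L]² → ℝ be of class C³ with u(0,y) = u(L,y) = 0 for all y ∈ [0,L]. Then ∫_Ω x · u(x,y) · u_xxx(x,y) dx dy = (3/2) ∫_Ω u_x(x,y)² dx dy − (L/2) ∫₀^L u_x(L,y)² dy. -/

import Mathlib

open MeasureTheory Real

noncomputable section

/-- Partial derivative in `x` of `u(x,y)`. -/
def pdx (u : ℝ → ℝ → ℝ) (x y : ℝ) : ℝ := deriv (fun x' => u x' y) x

/-- Third partial derivative in `x` of `u(x,y)`. -/
def pdx3 (u : ℝ → ℝ → ℝ) (x y : ℝ) : ℝ := iteratedDeriv 3 (fun x' => u x' y) x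

/-- Partial derivative in `y` of `u(x,y)`. -/
def pdy (u : ℝ → ℝ → ℝ) (x y : ℝ) : ℝ := deriv (fun y' => u x y') y

/-- Second partial derivative in `y` of `u(x,y)`. -/
def pdy2 (u : ℝ → ℝ → ℝ) (x y : ℝ) : ℝ := iteratedDeriv 2 (fun y' => u x y') y

/-- The nonlocal operator `(∂ₓ⁻¹ w)(x,y) = -∫ₓ^L w(s,y) ds`. -/
def pxInv (L : ℝ) (w : ℝ → ℝ → ℝ) (x y : ℝ) : ℝ := -(∫ s in x..L, w s y)

/-- The adjoint nonlocal operator `((∂ₓ⁻¹)* w)(x,y) = ∫₀^x w(s,y) ds`. -/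
def pxInvStar (w : ℝ → ℝ → ℝ) (x y : ℝ) : ℝ := ∫ s in (0:ℝ)..x, w s y

/-! For fixed `y`, put `f = u(·, y)`. The primitive `G = x f f'' - f f' - (x/2) f'²` satisfies
`G' = x f f''' - (3/2) f'²`, and `f(0) = f(L) = 0` leaves only `G(L) = -(L/2) f'(L)²`.
Integrating this one-dimensional identity in `y` (after Fubini on the continuous integrands)
gives the claim. -/

theorem hasDerivAt_morawetz_primitive {f f' f'' f''' : ℝ → ℝ} {x : ℝ}
    (hf : HasDerivAt f (f' x) x) (hf' : HasDerivAt f' (f'' x) x)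
    (hf'' : HasDerivAt f'' (f''' x) x) :
    HasDerivAt (fun x => x * f x * f'' x - f x * f' x - x / 2 * f' x ^ 2)
      (x * f x * f''' x - 3 / 2 * f' x ^ 2) x := by
  refine ((((hasDerivAt_id' x).fun_mul hf).fun_mul hf'').fun_sub (hf.fun_mul hf')).fun_sub
    (((hasDerivAt_id' x).div_const 2).fun_mul (hf'.fun_pow 2)) |>.congr_deriv ?_
  ring

theorem integral_mul_mul_iteratedDeriv_three {f : ℝ → ℝ} (hf : ContDiff ℝ 3 f) {a b : ℝ}
    (ha : f a = 0) (hb : f b = 0) :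
    ∫ x in a..b, x * f x * iteratedDeriv 3 f x
      = 3 / 2 * (∫ x in a..b, deriv f x ^ 2) - b / 2 * deriv f b ^ 2 + a / 2 * deriv f a ^ 2 := by
  have h0 : Differentiable ℝ f := hf.differentiable (by norm_num)
  have h1 : Differentiable ℝ (deriv f) := by
    simpa using hf.differentiable_iteratedDeriv 1 (by norm_num)
  have h2 : Differentiable ℝ (deriv (deriv f)) := by
    simpa [iteratedDeriv_succ] using hf.differentiable_iteratedDeriv 2 (by norm_num)
  have h3 : iteratedDeriv 3 f = deriv (deriv (deriv f)) := by simp [iteratedDeriv_succ]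
  have hcont₃ : Continuous fun x => x * f x * iteratedDeriv 3 f x :=
    (continuous_id.mul h0.continuous).mul (hf.continuous_iteratedDeriv 3 le_rfl)
  have hcont₁ : Continuous fun x => 3 / 2 * deriv f x ^ 2 :=
    continuous_const.mul (h1.continuous.pow 2)
  have hFTC : ∫ x in a..b, (x * f x * iteratedDeriv 3 f x - 3 / 2 * deriv f x ^ 2)
      = (b * f b * deriv (deriv f) b - f b * deriv f b - b / 2 * deriv f b ^ 2)
        - (a * f a * deriv (deriv f) a - f a * deriv f a - a / 2 * deriv f a ^ 2) :=
    intervalIntegral.integral_eq_sub_of_hasDerivAt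
      (fun x _ => h3 ▸ hasDerivAt_morawetz_primitive (h0 x).hasDerivAt (h1 x).hasDerivAt
        (h2 x).hasDerivAt)
      ((hcont₃.sub hcont₁).intervalIntegrable a b)
  rw [intervalIntegral.integral_sub (hcont₃.intervalIntegrable a b)
      (hcont₁.intervalIntegrable a b),
    intervalIntegral.integral_const_mul] at hFTC
  simp only [ha, hb, mul_zero, zero_mul, sub_zero] at hFTC
  linarith

theorem contDiff_pdx {n : WithTop ℕ∞} {u : ℝ → ℝ → ℝ}
    (hu : ContDiff ℝ (n + 1) fun p : ℝ × ℝ => u p.1 p.2) :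
    ContDiff ℝ n fun p : ℝ × ℝ => pdx u p.1 p.2 := by
  have hu' : ContDiff ℝ (n + 1) (Function.uncurry fun (p : ℝ × ℝ) (x : ℝ) => u x p.2) :=
    hu.comp (contDiff_snd.prodMk (contDiff_snd.comp contDiff_fst))
  simpa [pdx] using (hu'.fderiv contDiff_fst le_rfl).clm_apply (contDiff_const (c := (1 : ℝ)))

theorem pdx3_eq_pdx_pdx_pdx (u : ℝ → ℝ → ℝ) : pdx3 u = pdx (pdx (pdx u)) := by
  ext x y
  simp only [pdx3, pdx, iteratedDeriv_eq_iterate]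
  rfl

theorem intervalIntegral_intervalIntegral_swap_of_continuous {E : Type*} [NormedAddCommGroup E]
    [NormedSpace ℝ E] {F : ℝ → ℝ → E}
    (hF : Continuous (Function.uncurry F)) (a b c d : ℝ) :
    ∫ x in a..b, ∫ y in c..d, F x y = ∫ y in c..d, ∫ x in a..b, F x y :=
  intervalIntegral_intervalIntegral_swap <|
    (hF.continuousOn.integrableOn_compact (isCompact_uIcc.prod isCompact_uIcc)).mono_set
      (Set.prod_mono Set.uIoc_subset_uIcc Set.uIoc_subset_uIcc)

/-- Morawetz multiplier identity for the third-order term: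
`∫_Ω x u u_xxx dx dy = (3/2) ∫_Ω u_x² dx dy - (L/2) ∫₀^L u_x(L,y)² dy`
for `u` of class `C³` with `u(0,y) = u(L,y) = 0`. -/
theorem kp_morawetz_third_order (L : ℝ) (hL : 0 < L)
    (u : ℝ → ℝ → ℝ) (hu : ContDiff ℝ 3 (fun p : ℝ × ℝ => u p.1 p.2))
    (hb : ∀ y ∈ Set.Icc (0:ℝ) L, u 0 y = 0 ∧ u L y = 0) :
    (∫ x in (0:ℝ)..L, ∫ y in (0:ℝ)..L, x * u x y * pdx3 u x y)
      = (3/2) * (∫ x in (0:ℝ)..L, ∫ y in (0:ℝ)..L, (pdx u x y)^2)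
        - (L/2) * (∫ y in (0:ℝ)..L, (pdx u L y)^2) := by
  have hux : Continuous fun p : ℝ × ℝ => pdx u p.1 p.2 :=
    (contDiff_pdx (n := 2) hu).continuous
  have huxxx : Continuous fun p : ℝ × ℝ => pdx3 u p.1 p.2 := by
    rw [pdx3_eq_pdx_pdx_pdx]
    exact (contDiff_pdx (n := 0) <| contDiff_pdx (n := 1) <| contDiff_pdx (n := 2) hu).continuous
  have hslice : ∀ y ∈ Set.uIcc 0 L, ∫ x in (0:ℝ)..L, x * u x y * pdx3 u x y
      = 3 / 2 * (∫ x in (0:ℝ)..L, pdx u x y ^ 2) - L / 2 * pdx u L y ^ 2 := by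
    intro y hy
    rw [Set.uIcc_of_le hL.le] at hy
    have huy : ContDiff ℝ 3 fun x => u x y := hu.comp (contDiff_id.prodMk contDiff_const)
    simpa [pdx, pdx3] using integral_mul_mul_iteratedDeriv_three huy (hb y hy).1 (hb y hy).2
  rw [intervalIntegral_intervalIntegral_swap_of_continuous
      (F := fun x y => x * u x y * pdx3 u x y) (by fun_prop),
    intervalIntegral_intervalIntegral_swap_of_continuous (F := fun x y => pdx u x y ^ 2)
      (by fun_prop),
    intervalIntegral.integral_congr hslice, intervalIntegral.integral_sub,
    intervalIntegral.integral_const_mul, intervalIntegral.integral_const_mul]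
  all_goals exact (by fun_prop : Continuous _).intervalIntegrable _ _

end
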